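/- For every u = (u_1, ..., u_n) ∈ (ℝ^d)^n, every integer k with 1 ≤ k ≤ n, and every symmetric matrix α ∈ ℕ^{k×k}, the full contraction of moment tensors satisfies ⊗_α (M_{α_{11},α'_1}(u), ..., M_{α_{kk},α'_k}(u)) = Σ_{γ ∈ {1,...,n}^k} ∏_{1 ≤ i ≤ j ≤ k} (u_{γ_i} · u_{γ_j})^{α_{ij}}, where the factor for i = j is |u_{γ_i}|^{2 α_{ii}}. -/

import Mathlib

/-- Euclidean inner product on `ℝ^d`. -/
def dotR {d : ℕ} (v w : Fin d → ℝ) : ℝ := ∑ a, v a * w a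

/-- `|v|² = v · v`. -/
def normSqR {d : ℕ} (v : Fin d → ℝ) : ℝ := ∑ a, v a * v a

/-- The moment tensor `M_{μ,ν}(u)`: its `(j_1, …, j_ν)`-component is
`Σ_{i=1}^n |u_i|^{2μ} u_{i,j_1} ⋯ u_{i,j_ν}`. -/
def Mten {d n : ℕ} (u : Fin n → Fin d → ℝ) (μ ν : ℕ) (J : Fin ν → Fin d) : ℝ :=
  ∑ i : Fin n, (normSqR (u i)) ^ μ * ∏ l : Fin ν, u i (J l)

/-- Off-diagonal part of `α`: `α''_{ij} = α_{ij}` for `i ≠ j` and `0` on the diagonal,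
so that `α'_i = Σ_{j ≠ i} α_{ij} = Σ_j α''_{ij}`. -/
def offdiag {k : ℕ} (α : Fin k → Fin k → ℕ) (i j : Fin k) : ℕ := if i = j then 0 else α i j

/-- The type of collections `β = (β^{(i,j)})_{1 ≤ i < j ≤ k}` with
`β^{(i,j)} ∈ {1,…,d}^{α_{ij}}`. -/
abbrev BetaType (d k : ℕ) (α : Fin k → Fin k → ℕ) : Type :=
  ∀ p : {p : Fin k × Fin k // p.1 < p.2}, Fin (α p.val.1 p.val.2) → Fin d

/-- Look up the entry of the collection `β` associated to the (unordered) pair `{i,j}`,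
`i ≠ j`, using the convention `β^{(j,i)} := β^{(i,j)}` for `i < j` (this uses the symmetry
of `α`). -/
def lookup {d k : ℕ} (α : Fin k → Fin k → ℕ) (hsym : ∀ i j, α i j = α j i)
    (β : BetaType d k α) (i j : Fin k) (l : Fin (offdiag α i j)) : Fin d :=
  if h : i < j then
    β ⟨(i, j), h⟩ (Fin.cast (by simp [offdiag, h.ne]) l)
  else if h' : j < i then
    β ⟨(j, i), h'⟩ (Fin.cast (by simp only [offdiag, if_neg h'.ne']; exact hsym i j) l)
  else
    Fin.elim0 (Fin.cast
      (show offdiag α i j = 0 by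
        simp [offdiag, le_antisymm (not_lt.mp h') (not_lt.mp h)]) l)

/-- A bijection realizing the index set of the `i`-th tensor `T^{(i)}`, of order
`α'_i = Σ_j α''_{ij}`, as the "concatenation" of the blocks `{1,…,α''_{ij}}`, `j = 1,…,k`. -/
noncomputable def concatIdx {k : ℕ} (α : Fin k → Fin k → ℕ) (i : Fin k) :
    Fin (∑ j, offdiag α i j) ≃ (Σ j : Fin k, Fin (offdiag α i j)) :=
  (Fintype.equivFinOfCardEq (by simp)).symm

/-- The full contraction `⊗_α (M_{α_{11},α'_1}(u), …, M_{α_{kk},α'_k}(u))`: the sum over all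
collections `β` of the products over `i` of the components of `T^{(i)} = M_{α_{ii},α'_i}(u)`
whose multiindex is the concatenation of the `β^{(j,i)}`, `j < i`, and `β^{(i,j)}`, `j > i`. -/
noncomputable def contraction {d n : ℕ} (u : Fin n → Fin d → ℝ) (k : ℕ)
    (α : Fin k → Fin k → ℕ) (hsym : ∀ i j, α i j = α j i) : ℝ :=
  ∑ β : BetaType d k α, ∏ i : Fin k,
    Mten u (α i i) (∑ j, offdiag α i j)
      (fun z => lookup α hsym β i (concatIdx α i z).1 (concatIdx α i z).2)

/-
Expanding the product of the sums defining the moment tensors turns the contraction into a sum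
over particle labels `γ ∈ {1,…,n}^k` of sums over `β`. For fixed `γ`, each coordinate index in
`β^{(i,j)}` occurs exactly twice, once in `T^{(i)}` and once in `T^{(j)}`, so the `β`-sum factors
over the pairs `i < j` and over the `α_{ij}` indices of each pair, each factor being
`u_{γ_i} · u_{γ_j}`.
-/

open Finset

section PairProducts

variable {ι M : Type*} [Fintype ι] [LinearOrder ι] [CommMonoid M]

theorem prod_subtype_lt (f : ι → ι → M) :
    ∏ p : {p : ι × ι // p.1 < p.2}, f p.1.1 p.1.2
      = ∏ i, ∏ j ∈ univ.filter (fun j => i < j), f i j := by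
  rw [← prod_subtype (univ.filter fun p : ι × ι => p.1 < p.2) (by simp) fun p => f p.1 p.2,
    prod_filter, ← univ_product_univ, prod_product]
  exact prod_congr rfl fun i _ => (prod_filter _ _).symm

theorem prod_filter_le_eq_mul_prod_filter_lt (i : ι) (f : ι → M) :
    ∏ j ∈ univ.filter (fun j => i ≤ j), f j
      = f i * ∏ j ∈ univ.filter (fun j => i < j), f j := by
  have : univ.filter (fun j => i ≤ j) = insert i (univ.filter fun j => i < j) := by
    ext j; simp [le_iff_lt_or_eq, or_comm, eq_comm]
  rw [this, prod_insert (by simp)]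

theorem prod_prod_eq_prod_subtype_lt (F : ι → ι → M) (hF : ∀ i, F i i = 1) :
    ∏ i, ∏ j, F i j = ∏ p : {p : ι × ι // p.1 < p.2}, F p.1.1 p.1.2 * F p.1.2 p.1.1 := by
  have hrow (i : ι) : ∏ j, F i j
      = (∏ j ∈ univ.filter (fun j => i < j), F i j)
        * ∏ j ∈ univ.filter (fun j => j < i), F i j := by
    rw [← prod_filter_mul_prod_filter_not univ (fun j => i < j)]
    congr 1
    have : univ.filter (fun j => ¬ i < j) = insert i (univ.filter fun j => j < i) := by
      ext j; simp [not_lt, le_iff_lt_or_eq, or_comm, eq_comm]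
    rw [this, prod_insert (by simp), hF, one_mul]
  simp only [hrow, prod_mul_distrib, prod_subtype_lt]
  congr 1
  rw [prod_subtype_lt fun i j => F j i]
  exact prod_comm' (by simp)

end PairProducts

theorem sum_prod_mul_eq_dotR_pow {d : ℕ} (v w : Fin d → ℝ) (m : ℕ) :
    ∑ f : Fin m → Fin d, ∏ l, v (f l) * w (f l) = dotR v w ^ m :=
  (Fintype.sum_pow (fun a => v a * w a) m).symm

section Contraction

variable {d k : ℕ} (α : Fin k → Fin k → ℕ) (hsym : ∀ i j, α i j = α j i)

theorem prod_lookup_mul_prod_lookup (β : BetaType d k α) (v w : Fin d → ℝ) {i j : Fin k}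
    (h : i < j) :
    (∏ l, v (lookup α hsym β i j l)) * ∏ l, w (lookup α hsym β j i l)
      = ∏ l, v (β ⟨(i, j), h⟩ l) * w (β ⟨(i, j), h⟩ l) := by
  have hi : offdiag α i j = α i j := if_neg h.ne
  have hj : offdiag α j i = α i j := (if_neg h.ne').trans (hsym j i)
  rw [prod_mul_distrib]
  congr 1
  · exact Fintype.prod_equiv (finCongr hi) _ _ fun l => by simp only [lookup, dif_pos h]; rfl
  · exact Fintype.prod_equiv (finCongr hj) _ _ fun l => by
      simp only [lookup, dif_neg (lt_asymm h), dif_pos h]; rfl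

theorem prod_prod_lookup (β : BetaType d k α) (v : Fin k → Fin d → ℝ) :
    ∏ i, ∏ z, v i (lookup α hsym β i (concatIdx α i z).1 (concatIdx α i z).2)
      = ∏ p : {p : Fin k × Fin k // p.1 < p.2},
          ∏ l, v p.1.1 (β p l) * v p.1.2 (β p l) := by
  have hblocks (i : Fin k) :
      ∏ z, v i (lookup α hsym β i (concatIdx α i z).1 (concatIdx α i z).2)
        = ∏ j, ∏ l, v i (lookup α hsym β i j l) := by
    rw [(concatIdx α i).prod_comp fun s => v i (lookup α hsym β i s.1 s.2),
      ← univ_sigma_univ, prod_sigma]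
  have hdiag (i : Fin k) : ∏ l, v i (lookup α hsym β i i l) = 1 := by
    have : IsEmpty (Fin (offdiag α i i)) := by rw [offdiag, if_pos rfl]; infer_instance
    exact prod_of_isEmpty _
  simp only [hblocks]
  rw [prod_prod_eq_prod_subtype_lt (fun i j => ∏ l, v i (lookup α hsym β i j l)) hdiag]
  exact prod_congr rfl fun p _ => prod_lookup_mul_prod_lookup α hsym β _ _ p.2

theorem sum_betaType_prod_eq_prod_dotR_pow (v : Fin k → Fin d → ℝ) :
    ∑ β : BetaType d k α, ∏ i, normSqR (v i) ^ α i i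
        * ∏ z, v i (lookup α hsym β i (concatIdx α i z).1 (concatIdx α i z).2)
      = ∏ i, ∏ j ∈ univ.filter (fun j => i ≤ j), dotR (v i) (v j) ^ α i j := by
  have hβ (β : BetaType d k α) :
      ∏ i, normSqR (v i) ^ α i i
          * ∏ z, v i (lookup α hsym β i (concatIdx α i z).1 (concatIdx α i z).2)
        = (∏ i, normSqR (v i) ^ α i i)
          * ∏ p : {p : Fin k × Fin k // p.1 < p.2},
              ∏ l, v p.1.1 (β p l) * v p.1.2 (β p l) := by
    rw [prod_mul_distrib, prod_prod_lookup]
  simp only [hβ, ← mul_sum]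
  rw [← Fintype.prod_sum fun (p : {p : Fin k × Fin k // p.1 < p.2})
    (f : Fin (α p.1.1 p.1.2) → Fin d) => ∏ l, v p.1.1 (f l) * v p.1.2 (f l)]
  simp only [sum_prod_mul_eq_dotR_pow]
  simp only [prod_filter_le_eq_mul_prod_filter_lt, prod_mul_distrib,
    ← prod_subtype_lt fun i j => dotR (v i) (v j) ^ α i j]
  rfl

end Contraction

theorem stmt4_general (d n : ℕ)
    (u : Fin n → Fin d → ℝ) (k : ℕ)
    (α : Fin k → Fin k → ℕ) (hsym : ∀ i j, α i j = α j i) :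
    contraction u k α hsym
      = ∑ γ : Fin k → Fin n, ∏ i : Fin k,
          ∏ j ∈ Finset.univ.filter (fun j : Fin k => i ≤ j),
            (dotR (u (γ i)) (u (γ j))) ^ (α i j) := by
  simp only [contraction, Mten, Fintype.prod_sum]
  rw [sum_comm]
  exact sum_congr rfl fun γ _ => sum_betaType_prod_eq_prod_dotR_pow α hsym (u ∘ γ)

/-- For `1 ≤ k ≤ n` and symmetric `α ∈ ℕ^{k×k}`, the full contraction of the
moment tensors `M_{α_{ii}, α'_i}(u)` equals
`Σ_{γ ∈ {1,…,n}^k} Π_{1 ≤ i ≤ j ≤ k} (u_{γ_i} · u_{γ_j})^{α_{ij}}`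
(the factor for `i = j` being `|u_{γ_i}|^{2 α_{ii}}`). -/
theorem stmt4 (d n : ℕ) (hd : 1 ≤ d) (hn : 1 ≤ n)
    (u : Fin n → Fin d → ℝ) (k : ℕ) (hk1 : 1 ≤ k) (hkn : k ≤ n)
    (α : Fin k → Fin k → ℕ) (hsym : ∀ i j, α i j = α j i) :
    contraction u k α hsym
      = ∑ γ : Fin k → Fin n, ∏ i : Fin k,
          ∏ j ∈ Finset.univ.filter (fun j : Fin k => i ≤ j),
            (dotR (u (γ i)) (u (γ j))) ^ (α i j) :=
  stmt4_general d n u k α hsym
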